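/- arXiv:1402.2712 — 3 statements merged into one kernel-verified Lean document; each statement's English description precedes it below -/
import Mathlib

section
/- If t is a non-nil full balanced binary tree with n leaves (so n ≥ 1), then its edge-length height, namely Tree.height t − 1, is at most log_φ(n) (as a real number). (This is the paper's Lemma: a tournament tree with n > 0 leaves has height at most log_φ(n).) -/
/-!
`numLeaves` counts nil positions, and a balanced tree of height `h + 2` has subtrees of heights
`h + 1` and at least `h`, so the least `numLeaves` at height `h` obeys the Fibonacci recursion.
Since `φ ^ (h + 2) = φ ^ (h + 1) + φ ^ h`, induction gives `φ ^ height ≤ numLeaves`.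
-/

/-- The golden ratio `(1 + √5)/2`. -/
noncomputable def goldenRatioReal : ℝ := (1 + Real.sqrt 5) / 2

/-- A binary tree is full if every node has either both subtrees nil or both non-nil. -/
def IsFullTree {α : Type*} : Tree α → Prop
  | BinaryTree.nil => True
  | BinaryTree.node _ l r =>
      ((l = Tree.nil ∧ r = Tree.nil) ∨ (l ≠ Tree.nil ∧ r ≠ Tree.nil)) ∧
      IsFullTree l ∧ IsFullTree r

/-- A binary tree is balanced if at every node the heights of the two subtrees
differ by at most 1. -/
def IsBalancedTree {α : Type*} : Tree α → Prop
  | BinaryTree.nil => True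
  | BinaryTree.node _ l r =>
      (Tree.height l ≤ Tree.height r + 1 ∧ Tree.height r ≤ Tree.height l + 1) ∧
      IsBalancedTree l ∧ IsBalancedTree r

section

open Real
open scoped goldenRatio

theorem goldenRatio_pow_max_succ_le_add {p q : ℕ} (hpq : p ≤ q + 1) (hqp : q ≤ p + 1) :
    φ ^ (max p q + 1) ≤ φ ^ p + φ ^ q := by
  wlog hle : p ≤ q generalizing p q
  · rw [max_comm, add_comm (φ ^ p)]
    exact this hqp hpq (by omega)
  rw [max_eq_right hle]
  rcases q with _ | k
  · obtain rfl : p = 0 := by omega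
    simp only [zero_add, pow_one, pow_zero]
    linarith [goldenRatio_lt_two]
  · have hrec := goldenRatio_pow_sub_goldenRatio_pow k
    have hmono : φ ^ k ≤ φ ^ p := pow_le_pow_right₀ one_lt_goldenRatio.le (by omega)
    linarith

theorem goldenRatio_pow_height_le_numLeaves {α : Type*} {t : BinaryTree α}
    (hbal : IsBalancedTree t) : φ ^ t.height ≤ t.numLeaves := by
  induction t with
  | nil => simp [BinaryTree.height, BinaryTree.numLeaves]
  | node _ l r ihl ihr =>
    obtain ⟨⟨hlr, hrl⟩, hball, hbalr⟩ := hbal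
    simp only [BinaryTree.height, BinaryTree.numLeaves, Nat.cast_add]
    calc φ ^ (max l.height r.height + 1) ≤ φ ^ l.height + φ ^ r.height :=
          goldenRatio_pow_max_succ_le_add hlr hrl
      _ ≤ l.numLeaves + r.numLeaves := add_le_add (ihl hball) (ihr hbalr)

end

theorem height_le_logb_goldenRatio_numLeaves_general {α : Type*} (t : Tree α)
    (hbal : IsBalancedTree t) :
    ((Tree.height t - 1 : ℕ) : ℝ) ≤ Real.logb goldenRatioReal (Tree.numLeaves t) := by
  have hleaves : (0 : ℝ) < t.numLeaves := mod_cast t.numLeaves_pos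
  change _ ≤ Real.logb Real.goldenRatio _
  rw [Real.le_logb_iff_rpow_le Real.one_lt_goldenRatio hleaves, Real.rpow_natCast]
  calc Real.goldenRatio ^ (t.height - 1)
      ≤ Real.goldenRatio ^ t.height := pow_le_pow_right₀ Real.one_lt_goldenRatio.le (by omega)
    _ ≤ t.numLeaves := goldenRatio_pow_height_le_numLeaves hbal

/-- A tournament tree (non-nil full balanced binary tree) with `n` leaves has
edge-length height at most `log_φ n`. -/
theorem height_le_logb_goldenRatio_numLeaves {α : Type*} (t : Tree α)
    (hne : t ≠ Tree.nil) (hfull : IsFullTree t) (hbal : IsBalancedTree t) :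
    ((Tree.height t - 1 : ℕ) : ℝ) ≤ Real.logb goldenRatioReal (Tree.numLeaves t) :=
  height_le_logb_goldenRatio_numLeaves_general t hbal
end

section
/- For every real b > e^(1/e) and every i ∈ ℕ, there exists a real n' > 0 such that for all real n > n', (log*_b(n) : ℝ) ≤ log_b^[i](n). -/
/-!
For `b > e^(1/e)` the graph of `log_b` lies below the line `y = x - δ` with
`δ = (1 + log (log b)) / log b > 0` (compare `log_b` with its tangent of slope one).
So each application of `log_b` lowers a number above `1` by at least `δ`, and
`log*_b x ≤ (i + 1) + ⌈(log_b m - 1) / δ⌉` with `m = log_b^[i] x`. Since `log_b m = o(m)`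
and `log_b^[i] x → ∞`, the right-hand side is eventually at most `m`.
-/

/-- The iterated logarithm `log*_b x`: the least `i` such that `log_b^[i] x ≤ 1`. -/
noncomputable def logStar (b x : ℝ) : ℕ := sInf {i : ℕ | (Real.logb b)^[i] x ≤ 1}

open Filter Asymptotics Real

theorem logStar_le_of_iterate_le_one {b x : ℝ} {k : ℕ} (h : (logb b)^[k] x ≤ 1) :
    logStar b x ≤ k :=
  Nat.sInf_le h

theorem exists_iterate_le_of_le_sub {f : ℝ → ℝ} {a δ : ℝ}
    (hf : ∀ x, a < x → f x ≤ x - δ) (K : ℕ) :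
    ∀ x, x ≤ a + K * δ → ∃ k ≤ K, f^[k] x ≤ a := by
  induction K with
  | zero => exact fun x hx => ⟨0, le_rfl, by simpa using hx⟩
  | succ K ih =>
    intro x hx
    rcases le_or_gt x a with hxa | hax
    · exact ⟨0, Nat.zero_le _, hxa⟩
    · have hfx : f x ≤ a + K * δ := by
        have := hf x hax
        push_cast at hx
        linarith
      obtain ⟨k, hkK, hk⟩ := ih (f x) hfx
      exact ⟨k + 1, by omega, by rwa [Function.iterate_succ_apply]⟩

theorem exists_iterate_le_ceil_of_le_sub {f : ℝ → ℝ} {a δ : ℝ} (hδ : 0 < δ)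
    (hf : ∀ x, a < x → f x ≤ x - δ) (x : ℝ) :
    ∃ k ≤ ⌈(x - a) / δ⌉₊, f^[k] x ≤ a := by
  refine exists_iterate_le_of_le_sub hf _ x ?_
  have := (div_le_iff₀ hδ).1 (Nat.le_ceil ((x - a) / δ))
  linarith

theorem logb_le_sub_log_log_div_log {b x : ℝ} (hb : 1 < b) (hx : 0 < x) :
    logb b x ≤ x - (1 + log (log b)) / log b := by
  have hlog : 0 < log b := log_pos hb
  have := log_le_sub_one_of_pos (mul_pos hx hlog)
  rw [log_mul hx.ne' hlog.ne'] at this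
  rw [logb, div_le_iff₀ hlog, sub_mul, div_mul_cancel₀ _ hlog.ne']
  linarith

theorem one_add_log_log_pos {b : ℝ} (hb : exp (1 / exp 1) < b) : 0 < 1 + log (log b) := by
  have hlog : exp (-1) < log b := by
    rwa [exp_neg, ← one_div, lt_log_iff_exp_lt ((exp_pos _).trans hb)]
  have := log_lt_log (exp_pos _) hlog
  rw [log_exp] at this
  linarith

theorem eventually_natCeil_add_le_of_isLittleO {u : ℝ → ℝ} (hu : u =o[atTop] id) (C : ℝ) :
    ∀ᶠ x in atTop, (⌈u x⌉₊ : ℝ) + C ≤ x := by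
  have hsmall : (fun x => |u x| + (1 + C)) =o[atTop] id :=
    hu.norm_left.add (isLittleO_const_id_atTop _)
  filter_upwards [hsmall.eventuallyLE, eventually_ge_atTop 0] with x hx hx0
  have hceil : (⌈u x⌉₊ : ℝ) < |u x| + 1 :=
    (Nat.cast_le.2 (Nat.ceil_mono (le_abs_self _))).trans_lt (Nat.ceil_lt_add_one (abs_nonneg _))
  rw [Real.norm_eq_abs, Real.norm_eq_abs, id, abs_of_nonneg hx0] at hx
  linarith [le_abs_self (|u x| + (1 + C))]

/-- For every base `b > e^(1/e)` and every `i`, the iterated logarithm `log*_b n` is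
eventually at most the `i`-fold iterate `log_b^[i] n`. -/
theorem logStar_eventually_le_iterate_logb (b : ℝ)
    (hb : Real.exp (1 / Real.exp 1) < b) (i : ℕ) :
    ∃ n' : ℝ, 0 < n' ∧ ∀ n : ℝ, n' < n → (logStar b n : ℝ) ≤ (Real.logb b)^[i] n := by
  have hb1 : 1 < b := lt_of_le_of_lt (one_le_exp (by positivity)) hb
  set δ := (1 + log (log b)) / log b
  have hδ : 0 < δ := div_pos (one_add_log_log_pos hb) (log_pos hb1)
  have hsmall : (fun x => (logb b x - 1) / δ) =o[atTop] id := by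
    simpa only [div_eq_mul_inv, mul_comm] using
      (isLittleO_logb_id_atTop.sub (isLittleO_const_id_atTop 1)).const_mul_left δ⁻¹
  obtain ⟨N, hN⟩ := eventually_atTop.1 <| (tendsto_logb_atTop hb1).iterate i |>.eventually <|
    eventually_natCeil_add_le_of_isLittleO hsmall (i + 1)
  refine ⟨max N 1, by positivity, fun n hn => ?_⟩
  obtain ⟨k, hkK, hk⟩ := exists_iterate_le_ceil_of_le_sub hδ
    (fun x hx => logb_le_sub_log_log_div_log hb1 (one_pos.trans hx)) ((logb b)^[i + 1] n)
  rw [Function.iterate_succ_apply'] at hkK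
  calc (logStar b n : ℝ) ≤ k + (i + 1) := by
        exact_mod_cast logStar_le_of_iterate_le_one (by rwa [Function.iterate_add_apply])
    _ ≤ ⌈(logb b ((logb b)^[i] n) - 1) / δ⌉₊ + (i + 1) := by gcongr
    _ ≤ (logb b)^[i] n := hN n (le_of_max_le_left hn.le)
end

section
/- Let d > 0 be real and let µ : ℕ → ℝ → ℝ satisfy: (i) for all k ∈ ℕ and all real m > 1, µ(k, m) ≤ d·k·log(k) + µ(k−1, log_φ(m)) (where k−1 is truncated natural subtraction and log is the natural logarithm, with log 0 = 0); and (ii) for all k ∈ ℕ and all real m ≤ 1, µ(k, m) ≤ d. Then for all k ∈ ℕ and all real n, µ(k, n) ≤ d·k·log(k)·log*_φ(n) + d. -/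
/-!
For a base `b > e^{1/e}` (such as `φ`) the map `log_b` contracts by the factor `1/(e log b) < 1`
on `(1, ∞)`, so its iterates eventually drop below `1` and `log*_b` satisfies
`log*_b n = log*_b (log_b n) + 1` for `n > 1`. Induction on `log*_b n` then unrolls the
recurrence: each of its `log*_b n` steps costs at most `d k log k`, since `k log k` is monotone
in `k`, and the final step costs at most `d`.
-/

open Real

namespace Real

lemma log_le_div_exp_one {y : ℝ} (hy : 0 < y) : log y ≤ y / exp 1 := by
  have h := add_one_le_exp (log (y / exp 1))
  rwa [exp_log (by positivity), log_div hy.ne' (exp_pos 1).ne', log_exp, sub_add_cancel] at h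

lemma logb_le_div_mul_log {b y : ℝ} (hb : 1 < b) (hy : 0 < y) :
    logb b y ≤ y / (exp 1 * log b) := by
  rw [logb, ← div_div]
  exact div_le_div_of_nonneg_right (log_le_div_exp_one hy) (log_pos hb).le

/-- `log φ ≥ 1 - φ⁻¹ = 2 - φ ≈ 0.382`, while `e⁻¹ ≈ 0.368`. -/
lemma exp_inv_exp_one_lt_goldenRatio : exp (exp 1)⁻¹ < goldenRatio := by
  rw [← lt_log_iff_exp_lt goldenRatio_pos]
  have hsqrt : √5 < 2.24 := (sqrt_lt' (by norm_num)).2 (by norm_num)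
  have he : (2.7 : ℝ)⁻¹ ≥ (exp 1)⁻¹ := inv_anti₀ (by norm_num) (by linarith [exp_one_gt_d9])
  calc (exp 1)⁻¹ < 1 - (-goldenConj) := by norm_num [goldenConj] at he ⊢; linarith
    _ = 1 - goldenRatio⁻¹ := by rw [inv_goldenRatio]
    _ ≤ log goldenRatio := one_sub_inv_le_log_of_pos goldenRatio_pos

end Real

section LogStar

variable {b : ℝ}

lemma one_lt_of_exp_inv_exp_one_lt (hb : exp (exp 1)⁻¹ < b) : 1 < b :=
  (one_lt_exp_iff.2 (by positivity)).trans hb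

lemma exists_iterate_logb_le_one (hb : exp (exp 1)⁻¹ < b) (x : ℝ) :
    ∃ i, (logb b)^[i] x ≤ 1 := by
  have hb1 := one_lt_of_exp_inv_exp_one_lt hb
  set c := (exp 1 * log b)⁻¹
  have hc_pos : 0 < c := inv_pos.2 (mul_pos (exp_pos 1) (log_pos hb1))
  have hc_lt : c < 1 := inv_lt_one_of_one_lt₀ <|
    (inv_lt_iff_one_lt_mul₀' (exp_pos 1)).1 ((lt_log_iff_exp_lt (zero_lt_one.trans hb1)).2 hb)
  by_contra! hgt
  have hx : 0 < x := zero_lt_one.trans (hgt 0)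
  obtain ⟨N, hN⟩ := exists_pow_lt_of_lt_one (inv_pos.2 hx) hc_lt
  have hgeom : (logb b)^[N] x ≤ c ^ N * x :=
    le_geom (u := fun i => (logb b)^[i] x) hc_pos.le N fun k _ => by
      rw [Function.iterate_succ_apply', mul_comm, ← div_eq_mul_inv]
      exact logb_le_div_mul_log hb1 (zero_lt_one.trans (hgt k))
  have hsmall : c ^ N * x < 1 := by simpa [hx.ne'] using mul_lt_mul_of_pos_right hN hx
  exact (hgt N).not_ge (hgeom.trans hsmall.le)

lemma logStar_eq_zero_iff (hb : exp (exp 1)⁻¹ < b) {x : ℝ} : logStar b x = 0 ↔ x ≤ 1 := by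
  obtain ⟨i, hi⟩ := exists_iterate_logb_le_one hb x
  rw [logStar, Nat.sInf_eq_zero, or_iff_left (Set.nonempty_iff_ne_empty.1 ⟨i, hi⟩)]
  rfl

lemma logStar_of_one_lt (hb : exp (exp 1)⁻¹ < b) {x : ℝ} (hx : 1 < x) :
    logStar b x = logStar b (logb b x) + 1 := by
  have hpos : 1 ≤ logStar b x :=
    Nat.one_le_iff_ne_zero.2 fun h => hx.not_ge ((logStar_eq_zero_iff hb).1 h)
  rw [logStar, ← Nat.sInf_add hpos]
  simp only [logStar, Function.iterate_succ_apply]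

end LogStar

lemma le_mul_logStar_add_of_recurrence {b C : ℝ} (hb : exp (exp 1)⁻¹ < b) {f : ℕ → ℝ}
    (hf : Monotone f) {μ : ℕ → ℝ → ℝ}
    (hstep : ∀ (k : ℕ) (m : ℝ), 1 < m → μ k m ≤ f k + μ (k - 1) (logb b m))
    (hbase : ∀ (k : ℕ) (m : ℝ), m ≤ 1 → μ k m ≤ C) (k : ℕ) (n : ℝ) :
    μ k n ≤ f k * logStar b n + C := by
  obtain ⟨s, hs⟩ : ∃ s, logStar b n = s := ⟨_, rfl⟩
  induction s generalizing k n with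
  | zero => simpa [hs] using hbase k n ((logStar_eq_zero_iff hb).1 hs)
  | succ s ih =>
    have hn : 1 < n := not_le.1 fun hn => by simp [(logStar_eq_zero_iff hb).2 hn] at hs
    have hs' : logStar b (logb b n) = s := by rw [logStar_of_one_lt hb hn] at hs; omega
    calc μ k n ≤ f k + μ (k - 1) (logb b n) := hstep k n hn
      _ ≤ f k + (f (k - 1) * s + C) := by gcongr; exact hs' ▸ ih (k - 1) _ hs'
      _ ≤ f k + (f k * s + C) := by gcongr; exact hf (Nat.sub_le k 1)
      _ = f k * logStar b n + C := by rw [hs]; push_cast; ring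

lemma monotone_natCast_mul_log : Monotone fun k : ℕ => (k : ℝ) * log k := by
  intro j k hjk
  rcases j.eq_zero_or_pos with rfl | hj
  · simpa using mul_nonneg k.cast_nonneg (log_natCast_nonneg k)
  · have hjk' : (j : ℝ) ≤ k := by exact_mod_cast hjk
    exact mul_le_mul hjk' (log_le_log (by exact_mod_cast hj) hjk') (log_natCast_nonneg j)
      k.cast_nonneg

/-- The recurrence for the running time of `k` calls to the iterator:
if `μ k m ≤ d·k·log k + μ (k-1) (log_φ m)` for `m > 1` and `μ k m ≤ d` for `m ≤ 1`,
then `μ k n ≤ d·k·log k·log*_φ n + d`. -/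
theorem psort_recurrence_bound (d : ℝ) (hd : 0 < d) (μ : ℕ → ℝ → ℝ)
    (h1 : ∀ (k : ℕ) (m : ℝ), 1 < m →
      μ k m ≤ d * k * Real.log k + μ (k - 1) (Real.logb goldenRatioReal m))
    (h2 : ∀ (k : ℕ) (m : ℝ), m ≤ 1 → μ k m ≤ d) :
    ∀ (k : ℕ) (n : ℝ),
      μ k n ≤ d * k * Real.log k * (logStar goldenRatioReal n) + d := by
  have hf : Monotone fun k : ℕ => d * k * log k := fun j k hjk => by
    simpa only [mul_assoc] using mul_le_mul_of_nonneg_left (monotone_natCast_mul_log hjk) hd.le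
  exact le_mul_logStar_add_of_recurrence exp_inv_exp_one_lt_goldenRatio hf h1 h2
end
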